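/- If S is an edge metric basis of a connected graph G with |S| = k, then every vertex of S has degree at most 2^{k−1}. -/

import Mathlib

open SimpleGraph

/-- Distance from a vertex `v` to an edge `e = uw`: `min (d v u) (d v w)`. -/
noncomputable def edgeDist {V : Type*} (G : SimpleGraph V) (v : V) (e : Sym2 V) : ℕ :=
  Sym2.lift ⟨fun u w => min (G.dist v u) (G.dist v w), fun u w => by simp [min_comm]⟩ e

/-- `S` is an edge metric generator: every two distinct edges are distinguished
by some vertex of `S`. -/
def IsEdgeMetricGenerator {V : Type*} (G : SimpleGraph V) (S : Set V) : Prop :=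
  ∀ e₁ ∈ G.edgeSet, ∀ e₂ ∈ G.edgeSet, e₁ ≠ e₂ →
    ∃ v ∈ S, edgeDist G v e₁ ≠ edgeDist G v e₂

/-- The edge metric dimension: minimum cardinality of an edge metric generator. -/
noncomputable def edim {V : Type*} (G : SimpleGraph V) : ℕ :=
  sInf {k | ∃ S : Finset V, S.card = k ∧ IsEdgeMetricGenerator G ↑S}

/-!
Fix `v ∈ S`. For every vertex `u`, an edge `vw` is at distance `d(u, v)` or `d(u, v) - 1`
from `u`, since `w` is adjacent to `v`. Hence an edge at `v` is determined, as seen from `S`,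
by one bit per vertex `u ∈ S \ {v}`, while `v` itself sees all these edges at distance `0`.
Since `S` distinguishes edges, distinct neighbours of `v` get distinct bit vectors, so
`deg v ≤ 2 ^ (|S| - 1)`.
-/

section

variable {V : Type*} {G : SimpleGraph V}

lemma edgeDist_mk (G : SimpleGraph V) (u a b : V) :
    edgeDist G u s(a, b) = min (G.dist u a) (G.dist u b) :=
  rfl

lemma edgeDist_self_mk (G : SimpleGraph V) (v w : V) : edgeDist G v s(v, w) = 0 := by
  simp [edgeDist_mk]

lemma SimpleGraph.Adj.edgeDist_eq_or_add_one_eq {v w : V} (h : G.Adj v w) (u : V) :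
    edgeDist G u s(v, w) = G.dist u v ∨ edgeDist G u s(v, w) + 1 = G.dist u v := by
  have htri := h.symm.reachable.dist_triangle_right u
  rw [dist_eq_one_iff_adj.mpr h.symm] at htri
  rw [edgeDist_mk]
  omega

lemma SimpleGraph.Adj.edgeDist_eq_of_eq_dist_iff {v w₁ w₂ u : V} (h₁ : G.Adj v w₁)
    (h₂ : G.Adj v w₂)
    (h : edgeDist G u s(v, w₁) = G.dist u v ↔ edgeDist G u s(v, w₂) = G.dist u v) :
    edgeDist G u s(v, w₁) = edgeDist G u s(v, w₂) := by
  have := h₁.edgeDist_eq_or_add_one_eq u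
  have := h₂.edgeDist_eq_or_add_one_eq u
  omega

lemma IsEdgeMetricGenerator.injOn_neighborSet [DecidableEq V] {S : Finset V}
    (hS : IsEdgeMetricGenerator G S) {v : V} (hv : v ∈ S) :
    Set.InjOn (fun w (u : S.erase v) => decide (edgeDist G u s(v, w) = G.dist u v))
      (G.neighborSet v) := by
  intro w₁ h₁ w₂ h₂ hbits
  by_contra hne
  have hedge : s(v, w₁) ≠ s(v, w₂) := fun h => hne (Sym2.congr_right.mp h)
  obtain ⟨u, hu, hd⟩ := hS _ h₁ _ h₂ hedge
  by_cases huv : u = v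
  · subst huv
    simp [edgeDist_self_mk] at hd
  · have hbit := congrFun hbits ⟨u, Finset.mem_erase.mpr ⟨huv, hu⟩⟩
    exact hd ((h₁.edgeDist_eq_of_eq_dist_iff h₂) (by simpa using hbit))

end

theorem degree_le_of_mem_basis_general {V : Type*} [Fintype V] (G : SimpleGraph V)
    [DecidableRel G.Adj] (S : Finset V) (k : ℕ)
    (hgen : IsEdgeMetricGenerator G ↑S) (hk : S.card = k) :
    ∀ v ∈ S, G.degree v ≤ 2 ^ (k - 1) := by
  classical
  intro v hv
  have hinj := hgen.injOn_neighborSet hv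
  rw [← coe_neighborFinset] at hinj
  calc G.degree v = (G.neighborFinset v).card := (card_neighborFinset_eq_degree G v).symm
    _ ≤ (Finset.univ : Finset (S.erase v → Bool)).card :=
        Finset.card_le_card_of_injOn _ (fun _ _ => Finset.mem_coe.mpr (Finset.mem_univ _)) hinj
    _ = 2 ^ (k - 1) := by
        rw [Finset.card_univ, Fintype.card_fun, Fintype.card_bool, Fintype.card_coe,
          Finset.card_erase_of_mem hv, hk]

theorem degree_le_of_mem_basis {V : Type*} [Fintype V] (G : SimpleGraph V)
    [DecidableRel G.Adj] (hG : G.Connected) (S : Finset V) (k : ℕ)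
    (hgen : IsEdgeMetricGenerator G ↑S) (hbasis : S.card = edim G) (hk : S.card = k) :
    ∀ v ∈ S, G.degree v ≤ 2 ^ (k - 1) :=
  degree_le_of_mem_basis_general G S k hgen hk
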